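/- (Schoenberg) Let A be an m×n sign regular matrix with sign pattern ε (every r×r minor of A is either zero or has sign ε_r, for 1 ≤ r ≤ min{m,n}). Then S^-(Ax) ≤ S^-(x) for every x ∈ ℝ^n. -/

import Mathlib

open Matrix Filter

/-- Number of sign changes in a list of reals (consecutive pairs with negative product). -/
noncomputable def signChanges (l : List ℝ) : ℕ :=
  (l.zip l.tail).countP (fun p => decide (p.1 * p.2 < 0))

/-- `S^-(v)`: sign changes of the coordinates of `v` after discarding zero entries. -/
noncomputable def Sm {n : ℕ} (v : Fin n → ℝ) : ℕ :=
  signChanges ((List.ofFn v).filter (fun x => decide (x ≠ 0)))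

/-- `S^+(v)`: maximal number of sign changes over all ±1 completions of the zero
entries of `v`, with the convention `S^+(0) = n`. -/
noncomputable def Sp {n : ℕ} (v : Fin n → ℝ) : ℕ :=
  if v = 0 then n
  else Finset.univ.sup (fun σ : Fin n → Bool =>
    signChanges (List.ofFn (fun i => if v i = 0 then (if σ i then (1:ℝ) else -1) else v i)))

/-- First nonzero entry of a vector (`0` if the vector is zero). -/
noncomputable def firstNz {n : ℕ} (v : Fin n → ℝ) : ℝ :=
  ((List.ofFn v).filter (fun x => decide (x ≠ 0))).headI

/-- `A` is strictly sign regular with sign pattern `ε`: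
every `r × r` minor (`1 ≤ r ≤ min m n`) is nonzero with sign `ε r`. -/
def ssrPattern {m n : ℕ} (A : Matrix (Fin m) (Fin n) ℝ) (ε : ℕ → ℝ) : Prop :=
  ∀ r : ℕ, 1 ≤ r → r ≤ min m n → ∀ (f : Fin r → Fin m) (g : Fin r → Fin n),
    StrictMono f → StrictMono g → 0 < ε r * (A.submatrix f g).det

/-- `A` is sign regular with sign pattern `ε`:
every nonzero `r × r` minor (`1 ≤ r ≤ min m n`) has sign `ε r`. -/
def srPattern {m n : ℕ} (A : Matrix (Fin m) (Fin n) ℝ) (ε : ℕ → ℝ) : Prop :=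
  ∀ r : ℕ, 1 ≤ r → r ≤ min m n → ∀ (f : Fin r → Fin m) (g : Fin r → Fin n),
    StrictMono f → StrictMono g → 0 ≤ ε r * (A.submatrix f g).det

/-- The map `f` picks out consecutive indices. -/
def Contig {r m : ℕ} (f : Fin r → Fin m) : Prop :=
  ∃ a : ℕ, ∀ i : Fin r, (f i : ℕ) = a + (i : ℕ)

/-!
Split the coordinates of `x` into `S^-(x) + 1` consecutive blocks on which the nonzero entries
have constant sign. Then `x = E w` with `E ≥ 0` supported on those blocks and `w` of length
`S^-(x) + 1`, and `A E` is sign regular with pattern `ε` by the Cauchy–Binet expansion, so it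
suffices to show that a sign-regular `C` with `k + 1` columns has `S^-(C w) ≤ k`.
Otherwise `C w` strictly alternates on some `k + 2` rows forming `B`. The singular matrix
`[B | B w]`, expanded along its last column, is a sum of terms of one sign, so all maximal minors
of `B` vanish. A kernel vector of the top square block of `B` then lets us zero one entry of `w`
without changing the top `k + 1` entries of `B w`, and we conclude by induction on `k`.
-/

def IsAlternating {N : ℕ} (u : Fin N → ℝ) : Prop :=
  ∃ s : ℝ, ∀ i : Fin N, 0 < s * (-1) ^ (i : ℕ) * u i

theorem IsAlternating.comp_castSucc {N : ℕ} {u : Fin (N + 1) → ℝ} (hu : IsAlternating u) :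
    IsAlternating (u ∘ Fin.castSucc) :=
  let ⟨s, hs⟩ := hu
  ⟨s, fun i => hs i.castSucc⟩

@[simp]
theorem signChanges_cons_cons (a b : ℝ) (l : List ℝ) :
    signChanges (a :: b :: l) = signChanges (b :: l) + if a * b < 0 then 1 else 0 := by
  simp only [signChanges, List.tail_cons, List.zip_cons_cons, List.countP_cons, decide_eq_true_eq]

theorem signChanges_le_of_isPrefix {l₁ l₂ : List ℝ} (h : l₁ <+: l₂) :
    signChanges l₁ ≤ signChanges l₂ := by
  obtain ⟨r, rfl⟩ := h
  induction l₁ with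
  | nil => exact Nat.zero_le _
  | cons a t ih =>
    cases t with
    | nil => exact Nat.zero_le _
    | cons b t => simpa using ih

theorem head_mul_getLast_signChanges_pos :
    ∀ (l : List ℝ) (hl : l ≠ []), (∀ x ∈ l, x ≠ 0) →
      0 < l.head hl * (-1) ^ signChanges l * l.getLast hl
  | [a], _, h => by simpa [signChanges, mul_self_pos] using h a (by simp)
  | a :: b :: l, _, h => by
    have ih := head_mul_getLast_signChanges_pos (b :: l) (List.cons_ne_nil b l)
      fun x hx => h x (List.mem_cons_of_mem a hx)
    have hb : b ≠ 0 := h b (by simp)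
    have ha : a ≠ 0 := h a (by simp)
    simp only [List.head_cons, List.getLast_cons_cons, signChanges_cons_cons] at ih ⊢
    split_ifs with hab
    · rw [pow_succ]
      nlinarith [mul_self_pos.2 hb]
    · have hab : 0 < a * b := lt_of_le_of_ne (not_lt.1 hab) (mul_ne_zero ha hb).symm
      rw [add_zero]
      nlinarith [mul_self_pos.2 hb]

theorem exists_alternating_sublist : ∀ (a : ℝ) (l : List ℝ), (∀ x ∈ a :: l, x ≠ 0) →
    ∃ t : List ℝ, t.Sublist (a :: l) ∧ t.length = signChanges (a :: l) + 1 ∧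
      ∀ (i : ℕ) (hi : i < t.length), 0 < a * (-1) ^ i * t[i]
  | a, [], h => ⟨[a], List.Sublist.refl _, rfl, fun i hi => by
      obtain rfl : i = 0 := by simpa using hi
      simpa [mul_self_pos] using h a (by simp)⟩
  | a, b :: l, h => by
    obtain ⟨t, hsub, hlen, halt⟩ :=
      exists_alternating_sublist b l fun x hx => h x (List.mem_cons_of_mem a hx)
    have ha : a ≠ 0 := h a (by simp)
    have hb : b ≠ 0 := h b (by simp)
    rw [signChanges_cons_cons]
    by_cases hab : a * b < 0
    · refine ⟨a :: t, hsub.cons_cons a, by simp [hlen, hab], fun i hi => ?_⟩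
      cases i with
      | zero => simpa [mul_self_pos] using ha
      | succ i =>
        have := halt i (by simpa using hi)
        simp only [List.getElem_cons_succ, pow_succ]
        nlinarith [mul_self_pos.2 hb]
    · refine ⟨t, hsub.cons a, by simp [hlen, hab], fun i hi => ?_⟩
      have := halt i hi
      have hab : 0 < a * b := lt_of_le_of_ne (not_lt.1 hab) (mul_ne_zero ha hb).symm
      nlinarith [mul_self_pos.2 hb]

theorem exists_strictMono_isAlternating {N k : ℕ} (v : Fin N → ℝ) (hv : k + 1 ≤ Sm v) :
    ∃ i : Fin (k + 2) → Fin N, StrictMono i ∧ IsAlternating (v ∘ i) := by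
  set F := (List.ofFn v).filter (fun x => decide (x ≠ 0)) with hF
  obtain ⟨a, l, haF⟩ : ∃ a l, F = a :: l := List.exists_cons_of_ne_nil fun h => by
    rw [Sm, ← hF, h] at hv
    exact absurd hv (by simp [signChanges])
  have hnz : ∀ x ∈ a :: l, x ≠ 0 := fun x hx => by
    simpa using List.of_mem_filter (haF ▸ hx : x ∈ F)
  obtain ⟨t, hsub, hlen, halt⟩ := exists_alternating_sublist a l hnz
  have hSm : Sm v = signChanges (a :: l) := by rw [Sm, ← hF, haF]
  have hlen' : (t.take (k + 2)).length = k + 2 := by simp; omega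
  have hF_sub : (a :: l).Sublist (List.ofFn v) := haF ▸ List.filter_sublist
  obtain ⟨f, hf⟩ := List.sublist_iff_exists_fin_orderEmbedding_get_eq.1
    ((List.take_sublist _ _).trans (hsub.trans hF_sub))
  refine ⟨fun j => Fin.cast List.length_ofFn (f (Fin.cast hlen'.symm j)),
    fun _ _ h => f.strictMono h, a, fun j => ?_⟩
  have := hf (Fin.cast hlen'.symm j)
  simp only [List.get_eq_getElem, List.getElem_take, List.getElem_ofFn] at this
  convert halt j (by omega) using 2
  exact this.symm

theorem eq_abs_mul_of_pos_mul {c x : ℝ} (h : 0 < c * x) : x = |x| * if 0 < c then 1 else -1 := by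
  split_ifs with hc
  · rw [abs_of_pos (pos_of_mul_pos_right h hc.le), mul_one]
  · have : x < 0 := by nlinarith
    rw [abs_of_neg this]
    ring

theorem exists_monotone_signBlocks {n : ℕ} (x : Fin n → ℝ) :
    ∃ (t : Fin n → Fin (Sm x + 1)) (w : Fin (Sm x + 1) → ℝ),
      Monotone t ∧ ∀ l, x l = |x l| * w (t l) := by
  set p : ℝ → Bool := fun y => decide (y ≠ 0)
  set F := (List.ofFn x).filter p
  set pre : Fin n → List ℝ := fun l => ((List.ofFn x).take (l + 1)).filter p
  have hpre : ∀ l, (pre l).IsPrefix F := fun l => (List.take_prefix _ _).filter p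
  have hmono : Monotone fun l => signChanges (pre l) := fun l l' h =>
    signChanges_le_of_isPrefix ((List.take_prefix_take_left (by omega)).filter p)
  set t : Fin n → Fin (Sm x + 1) := fun l =>
    ⟨signChanges (pre l), Nat.lt_succ_of_le (signChanges_le_of_isPrefix (hpre l))⟩
  by_cases hF : F = []
  · refine ⟨t, 0, hmono, fun l => ?_⟩
    by_contra hxl
    have : x l ∈ F := List.mem_filter.2 ⟨List.mem_ofFn.2 ⟨l, rfl⟩, by simpa [p] using hxl⟩
    simp [hF] at this
  refine ⟨t, fun c => if 0 < F.head hF * (-1) ^ (c : ℕ) then 1 else -1, hmono, fun l => ?_⟩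
  by_cases hxl : x l = 0
  · simp [hxl]
  have hpre_eq : pre l = ((List.ofFn x).take l).filter p ++ [x l] := by
    simp [pre, List.take_add_one, p, hxl]
  have hne : pre l ≠ [] := by simp [hpre_eq]
  have h := head_mul_getLast_signChanges_pos (pre l) hne fun y hy => by
    simpa [p] using List.of_mem_filter hy
  have hlast : (pre l).getLast hne = x l := by simp only [hpre_eq, List.getLast_concat]
  rw [(hpre l).head hne, hlast] at h
  exact eq_abs_mul_of_pos_mul h

namespace Matrix

theorem det_mul_eq_sum_det_submatrix {R n ι : Type*} [CommRing R] [Fintype n] [DecidableEq n]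
    [Fintype ι] (P : Matrix n ι R) (Q : Matrix ι n R) :
    (P * Q).det = ∑ p : n → ι, (∏ j, Q (p j) j) * (P.submatrix id p).det := by
  simp only [det_apply', mul_apply, Finset.prod_univ_sum, Finset.mul_sum, Fintype.piFinset_univ,
    submatrix_apply, id]
  rw [Finset.sum_comm]
  refine Finset.sum_congr rfl fun p _ => Finset.sum_congr rfl fun σ _ => ?_
  rw [Finset.prod_mul_distrib]
  ring

theorem mulVec_eq_submatrix_succAbove_mulVec {R α : Type*} [NonUnitalNonAssocSemiring R] {k : ℕ}
    (M : Matrix α (Fin (k + 1)) R) {v : Fin (k + 1) → R} {j : Fin (k + 1)} (hj : v j = 0) :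
    M *ᵥ v = M.submatrix id j.succAbove *ᵥ (v ∘ j.succAbove) := by
  ext i
  simp [mulVec, dotProduct, Fin.sum_univ_succAbove _ j, hj]

end Matrix

theorem srPattern.submatrix {m n m' n' : ℕ} {A : Matrix (Fin m) (Fin n) ℝ} {ε : ℕ → ℝ}
    (hA : srPattern A ε) {f : Fin m' → Fin m} {g : Fin n' → Fin n} (hf : StrictMono f)
    (hg : StrictMono g) : srPattern (A.submatrix f g) ε := by
  intro r hr1 hr f' g' hf' hg'
  rw [submatrix_submatrix]
  have hsize : min m' n' ≤ min m n :=
    min_le_min (Fin.le_of_injective f hf.injective) (Fin.le_of_injective g hg.injective)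
  exact hA r hr1 (hr.trans hsize) _ _ (hf.comp hf') (hg.comp hg')

theorem srPattern.mul_of_monotone {m n k : ℕ} {A : Matrix (Fin m) (Fin n) ℝ} {ε : ℕ → ℝ}
    (hA : srPattern A ε) {E : Matrix (Fin n) (Fin k) ℝ} {t : Fin n → Fin k} (ht : Monotone t)
    (hE : ∀ l c, 0 ≤ E l c) (hEt : ∀ l c, E l c ≠ 0 → c = t l) :
    srPattern (A * E) ε := by
  intro r hr1 hr f g hf hg
  have hsplit : (A * E).submatrix f g = A.submatrix f id * E.submatrix id g := rfl
  rw [hsplit, det_mul_eq_sum_det_submatrix, Finset.mul_sum]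
  refine Finset.sum_nonneg fun p _ => ?_
  by_cases hp : ∀ j, t (p j) = g j
  · have hpmono : StrictMono p := fun j j' h => ht.reflect_lt (by simpa [hp] using hg h)
    have hminor := hA r hr1 (le_min (hr.trans (min_le_left _ _))
      (Fin.le_of_injective p hpmono.injective)) f p hf hpmono
    rw [mul_left_comm]
    exact mul_nonneg (Finset.prod_nonneg fun j _ => hE _ _) hminor
  · obtain ⟨j, hj⟩ := not_forall.1 hp
    rw [Finset.prod_eq_zero (Finset.mem_univ j) (not_not.1 fun h => hj (hEt _ _ h).symm)]
    simp

theorem det_submatrix_succAbove_eq_zero_of_isAlternating {k : ℕ}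
    {B : Matrix (Fin (k + 2)) (Fin (k + 1)) ℝ} {ε : ℕ → ℝ} (hB : srPattern B ε)
    (hε : ε (k + 1) ≠ 0) {w : Fin (k + 1) → ℝ} (hw : IsAlternating (B *ᵥ w))
    (i : Fin (k + 2)) :
    (B.submatrix i.succAbove id).det = 0 := by
  obtain ⟨s, hs⟩ := hw
  set u := B *ᵥ w
  set M : Fin (k + 2) → ℝ := fun i => (B.submatrix i.succAbove id).det
  set D : Matrix (Fin (k + 2)) (Fin (k + 2)) ℝ := of fun i => Fin.snoc (B i) (u i)
  have hD : D.det = 0 := exists_mulVec_eq_zero_iff.1 ⟨Fin.snoc w (-1),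
    fun h => by simpa using congr_fun h (Fin.last _),
    by ext i; simp [D, u, mulVec, dotProduct, Fin.sum_univ_castSucc]⟩
  have hminor : ∀ i, (D.submatrix i.succAbove (Fin.last _).succAbove).det = M i :=
    fun i => congrArg det (by ext; simp [D])
  have hterm (i : Fin (k + 2)) : 0 ≤ (s * (-1) ^ (i : ℕ) * u i) * (ε (k + 1) * M i) :=
    mul_nonneg (hs i).le (hB _ (by omega) (by simp) _ _ (Fin.strictMono_succAbove i) strictMono_id)
  have hsq : ((-1 : ℝ) ^ (k + 1)) * (-1) ^ (k + 1) = 1 := by rw [← mul_pow]; norm_num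
  have hsum : ∑ i : Fin (k + 2), (s * (-1) ^ (i : ℕ) * u i) * (ε (k + 1) * M i) = 0 :=
    calc _ = s * ε (k + 1) * (-1) ^ (k + 1) * ∑ i : Fin (k + 2),
          (-1) ^ ((i : ℕ) + (Fin.last (k + 1) : ℕ)) * D i (Fin.last _) *
            (D.submatrix i.succAbove (Fin.last _).succAbove).det := by
          rw [Finset.mul_sum]
          refine Finset.sum_congr rfl fun i _ => ?_
          rw [hminor]
          simp only [D, of_apply, Fin.snoc_last, Fin.val_last, pow_add]
          linear_combination -(s * (-1) ^ (i : ℕ) * u i * ε (k + 1) * M i) * hsq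
      _ = 0 := by rw [← det_succ_column, hD, mul_zero]
  have := (Finset.sum_eq_zero_iff_of_nonneg fun i _ => hterm i).1 hsum i (Finset.mem_univ _)
  simpa [(hs i).ne', hε] using this

theorem not_isAlternating_mulVec {ε : ℕ → ℝ} (hε : ∀ r, ε r ≠ 0) :
    ∀ {k : ℕ} {B : Matrix (Fin (k + 1)) (Fin k) ℝ}, srPattern B ε →
      ∀ w, ¬ IsAlternating (B *ᵥ w)
  | 0, B, _, w, ⟨s, hs⟩ => by simpa [mulVec, dotProduct] using hs 0
  | k + 1, B, hB, w, hw => by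
    have h0 : (B.submatrix Fin.castSucc id).det = 0 := by
      simpa using det_submatrix_succAbove_eq_zero_of_isAlternating hB (hε _) hw (Fin.last _)
    obtain ⟨c, hc, hBc⟩ := exists_mulVec_eq_zero_iff.2 h0
    obtain ⟨j, hj⟩ := Function.ne_iff.1 hc
    set w' := w - (w j / c j) • c
    have hw'j : w' j = 0 := by
      simp only [w', Pi.sub_apply, Pi.smul_apply, smul_eq_mul, div_mul_cancel₀ _ hj, sub_self]
    have hB' : B.submatrix Fin.castSucc j.succAbove *ᵥ (w' ∘ j.succAbove) =
        (B *ᵥ w) ∘ Fin.castSucc :=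
      calc _ = B.submatrix Fin.castSucc id *ᵥ w' :=
            (mulVec_eq_submatrix_succAbove_mulVec _ hw'j).symm
        _ = B.submatrix Fin.castSucc id *ᵥ w := by simp [w', mulVec_sub, mulVec_smul, hBc]
        _ = _ := rfl
    exact not_isAlternating_mulVec hε
      (hB.submatrix Fin.strictMono_castSucc (Fin.strictMono_succAbove j)) _
      (hB' ▸ hw.comp_castSucc)

theorem Sm_mulVec_le_of_srPattern {m k : ℕ} {C : Matrix (Fin m) (Fin (k + 1)) ℝ}
    {ε : ℕ → ℝ} (hC : srPattern C ε) (hε : ∀ r, ε r ≠ 0) (w : Fin (k + 1) → ℝ) :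
    Sm (C *ᵥ w) ≤ k := by
  by_contra! h
  obtain ⟨i, hi, halt⟩ := exists_strictMono_isAlternating (C *ᵥ w) h
  exact not_isAlternating_mulVec hε (hC.submatrix hi strictMono_id) w halt

theorem stmt11 {m n : ℕ} (A : Matrix (Fin m) (Fin n) ℝ) (ε : ℕ → ℝ)
    (hsv : ∀ r, ε r = 1 ∨ ε r = -1) (hA : srPattern A ε) :
    ∀ x : Fin n → ℝ, Sm (A *ᵥ x) ≤ Sm x := by
  have hε : ∀ r, ε r ≠ 0 := fun r => by rcases hsv r with h | h <;> simp [h]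
  intro x
  obtain ⟨t, w, ht, hx⟩ := exists_monotone_signBlocks x
  set E : Matrix (Fin n) (Fin (Sm x + 1)) ℝ := of fun l c => if c = t l then |x l| else 0
  have hEw : E *ᵥ w = x := funext fun l => by simp [E, mulVec, dotProduct, ← hx l]
  have hAx : A *ᵥ x = (A * E) *ᵥ w := by rw [← mulVec_mulVec, hEw]
  rw [hAx]
  refine Sm_mulVec_le_of_srPattern (hA.mul_of_monotone ht (fun l c => ?_) (fun l c h => ?_)) hε w
  · simp only [E, of_apply]
    split_ifs <;> positivity
  · by_contra hc
    simp [E, hc] at h
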